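/- arXiv:2605.10695 — 2 statements merged into one kernel-verified Lean document; each statement's English description precedes it below -/
import Mathlib

section
/- Let $(M,\omega)$ be an $n$-plectic manifold and let $v_1, v_2$ be Hamiltonian multivector fields (i.e. $\mathcal{L}_{v_i}\omega = 0$ and $d\iota_{v_i}\omega$ is determined by Hamiltonian forms). Then $d\,\iota_{v_1\wedge v_2}\omega = (-1)^{(|v_2|-1)|v_1|}\,\iota_{[v_2,v_1]}\omega$, where $[\cdot,\cdot]$ is the Schouten–Nijenhuis bracket. -/
/-- The sign `(-1)^e` for an integer exponent `e`. -/
def ksign (e : ℤ) : ℤ := (((-1 : ℤˣ) ^ e : ℤˣ) : ℤ)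

/-- Abstract operator setting for an `n`-plectic manifold: forms `Ω`
with differential `d`, multivector fields `X` with degree `deg`, wedge `wedge`,
Schouten bracket `br`, and interior product `ι` (additive in the form), satisfying
`ι_{u∧v} = ι_v ι_u` and the fundamental identity
`ι_{[u,v]}α = (-1)^{(|u|-1)|v|} 𝓛_u ι_v α - ι_v 𝓛_u α`, where
`𝓛_w β = d (ι_w β) - (-1)^{|w|} ι_w (d β)`.  If `ω` is closed and `v₁, v₂` are
Hamiltonian multivector fields (`𝓛_{vᵢ} ω = 0`), then
`d ι_{v₁∧v₂} ω = (-1)^{(|v₂|-1)|v₁|} ι_{[v₂,v₁]} ω`. -/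
theorem d_contraction_wedge_two
    {Ω X : Type*} [AddCommGroup Ω]
    (d : Ω →+ Ω) (ι : X → Ω →+ Ω) (wedge : X → X → X) (br : X → X → X)
    (deg : X → ℤ)
    (hιw : ∀ (u v : X) (α : Ω), ι (wedge u v) α = ι v (ι u α))
    (hfund : ∀ (u v : X) (α : Ω),
      ι (br u v) α =
        ksign ((deg u - 1) * deg v) •
            (d (ι u (ι v α)) - ksign (deg u) • ι u (d (ι v α)))
          - ι v (d (ι u α) - ksign (deg u) • ι u (d α)))
    (ω : Ω) (hω : d ω = 0)
    (v₁ v₂ : X)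
    (h₁ : d (ι v₁ ω) - ksign (deg v₁) • ι v₁ (d ω) = 0)
    (h₂ : d (ι v₂ ω) - ksign (deg v₂) • ι v₂ (d ω) = 0) :
    d (ι (wedge v₁ v₂) ω) = ksign ((deg v₂ - 1) * deg v₁) • ι (br v₂ v₁) ω := by
  have hsq : ∀ (e : ℤ) (x : Ω), ksign e • ksign e • x = x := by
    intro e x
    rw [smul_smul]
    have : ksign e * ksign e = 1 := by
      unfold ksign
      rcases Int.units_eq_one_or ((-1 : ℤˣ) ^ e) with h | h <;> rw [h] <;> rfl
    rw [this, one_smul]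
  have hd1 : d (ι v₁ ω) = 0 := by
    have := h₁
    rw [hω, map_zero, smul_zero, sub_zero] at this
    exact this
  have key := hfund v₂ v₁ ω
  rw [h₂, map_zero, hd1, map_zero, smul_zero, sub_zero, sub_zero] at key
  rw [key, hsq, hιw]
end

section
/- Let $d_i: X_k\to X_{k-1}$ be the face maps of the semi-simplicial set of observables defined via $d\eta_i = -(-1)^i\iota_{\tilde v_i}d\alpha$ along inward normal fields. Assume for $i<j$ the normal bivector identity $(\partial_j)_* v_i\wedge v_j = -(\partial_i)_* v_{j-1}\wedge v_i$ on the common codimension-2 face. Then the forms $\eta_{ij}$ and $\eta'_{ij}$ produced by the two orders of face maps satisfy $d\eta_{ij} = d\eta'_{ij}$; hence $d^i d^j = d^{j-1}d^i$ modulo closed forms. -/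
/-- Commutation of the face maps of the semi-simplicial set of
observables.  Abstract setting: forms `Ω`, a differential `d`, multivector fields
`X` (a ring under the wedge product) and an interior product `ι` with
`ι_x ι_y = ι_{y∧x}` (as used in the paper, `ι x (ι y β) = ι (x*y) β` after
reordering), linear in the form.  Let `A = (∂ⱼ)_* vᵢ`, `B = vⱼ`, `C = (∂ᵢ)_* v_{j-1}`,
`D = vᵢ` denote the (pushforwards of the) inward normal vector fields, and suppose
the normal bivector identity `A ∧ B = -(C ∧ D)` holds (with the vector fields
anticommuting).  If `ηⱼ, ηᵢ, η_{ij}, η'_{ij}` satisfy the defining equations of the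
two iterated face maps, then `d η_{ij} = d η'_{ij}`; hence `dⁱ dʲ = d^{j-1} dⁱ`
modulo closed forms. -/
theorem face_maps_commute
    {Ω X : Type*} [AddCommGroup Ω] [Ring X]
    (d : Ω → Ω) (ι : X → Ω → Ω)
    (hιmul : ∀ (x y : X) (β : Ω), ι x (ι y β) = ι (y * x) β)
    (hιneg : ∀ (x : X) (β : Ω), ι (-x) β = -(ι x β))
    (hιsmul : ∀ (x : X) (c : ℤ) (β : Ω), ι x (c • β) = c • ι x β)
    (i j : ℕ) (hij : i < j)
    (α ηi ηj ηij η'ij : Ω) (A B C D : X)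
    (hηj : d ηj = -(((-1 : ℤ) ^ j) • ι B (d α)))
    (hηi : d ηi = -(((-1 : ℤ) ^ i) • ι D (d α)))
    (hηij : d ηij = -(((-1 : ℤ) ^ i) • ι A (d ηj)))
    (hη'ij : d η'ij = -(((-1 : ℤ) ^ (j - 1)) • ι C (d ηi)))
    (hwedge : A * B = -(C * D))
    (hBA : B * A = -(A * B))
    (hDC : D * C = -(C * D)) :
    d ηij = d η'ij := by
  obtain ⟨j', rfl⟩ : ∃ j', j = j' + 1 := ⟨j - 1, (Nat.succ_pred_eq_of_pos (by omega)).symm⟩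
  have key : ∀ (x : X) (β : Ω), ι x (-β) = -(ι x β) := by
    intro x β
    have h := hιsmul x (-1) β
    simpa using h
  rw [hηij, hη'ij, hηj, hηi, key, key, hιsmul, hιsmul, hιmul, hιmul, hBA, hwedge,
    hDC, hιneg, hιneg]
  simp only [Nat.add_sub_cancel, pow_succ, smul_neg, neg_neg, smul_smul]
  ring_nf
  rw [neg_smul]
end
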